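/- Suppose Λ_θ : [0,∞) → [0,∞) satisfies Λ_θ(t) = θ h(t) + B ∫₀^t (e^{Λ_θ(t−s)} − 1) h(s) ds where h ≥ 0 with ∫₀^∞ h = 1 and 0 ≤ B < 1, Λ_θ is bounded, and Λ_θ(t) → 0 as t → ∞. Then ∫₀^∞ Λ_θ(t) dt ≤ (θ + C_δ)/(1 − B(1+δ)) for suitable δ > 0 with B(1+δ) < 1, and in particular ∫₀^∞ Λ_θ(t) dt < ∞ and ∫₀^∞ (e^{Λ_θ(t)} − 1) dt < ∞. -/

import Mathlib

/-!
Beyond some `T` the function `Λ` is so small that `e^Λ - 1 ≤ (1 + δ) Λ`, while on `[0, T)` the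
bound `Λ ≤ C` gives `e^Λ - 1 ≤ e^C - 1`; call the resulting majorant `ψ`. Inserting it into the
renewal equation and integrating over `(0, M]`, Tonelli bounds the convolution term by
`(∫₀^M h) · ∫₀^M ψ ≤ ∫₀^M ψ`, so `L = ∫₀^M Λ` satisfies `L ≤ θ + B ((1 + δ) L + (e^C - 1) T)`.
Since `L` is finite (`Λ` is bounded) and `B (1 + δ) < 1`, this bounds `L` uniformly in `M`.
Finally `e^Λ - 1 ≤ e^C Λ`.
-/

open MeasureTheory Real Set Filter Topology ENNReal

theorem Real.exp_sub_one_le_mul_exp (x : ℝ) : exp x - 1 ≤ x * exp x := by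
  have h := mul_le_mul_of_nonneg_right (add_one_le_exp (-x)) (exp_pos x).le
  rw [← exp_add, neg_add_cancel, exp_zero] at h
  linarith

theorem Real.exp_sub_one_le_mul_of_le_log {x a : ℝ} (hx : 0 ≤ x) (ha : 0 < a) (hxa : x ≤ log a) :
    exp x - 1 ≤ a * x := by
  calc exp x - 1 ≤ x * exp x := exp_sub_one_le_mul_exp x
    _ ≤ x * a := mul_le_mul_of_nonneg_left ((exp_le_exp.2 hxa).trans_eq (exp_log ha)) hx
    _ = a * x := mul_comm x a

theorem exists_exp_sub_one_le_of_tendsto_zero {Λ : ℝ → ℝ} {C δ : ℝ} (hΛnn : ∀ t, 0 ≤ Λ t)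
    (hΛC : ∀ t, Λ t ≤ C) (hlim : Tendsto Λ atTop (𝓝 0)) (hδ : 0 < δ) :
    ∃ T, 0 ≤ T ∧
      ∀ u, exp (Λ u) - 1 ≤ (1 + δ) * Λ u + (Iio T).indicator (fun _ => exp C - 1) u := by
  obtain ⟨T, hT⟩ :=
    (hlim.eventually_le_const (log_pos (by linarith : 1 < 1 + δ))).exists_forall_of_atTop
  refine ⟨max T 0, le_max_right _ _, fun u => ?_⟩
  by_cases hu : u ∈ Iio (max T 0)
  · rw [indicator_of_mem hu]
    nlinarith [exp_le_exp.2 (hΛC u), hΛnn u]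
  · rw [indicator_of_notMem hu, add_zero]
    exact exp_sub_one_le_mul_of_le_log (hΛnn u) (by linarith)
      (hT u (le_of_max_le_left (not_lt.1 hu)))

theorem setLIntegral_Ioc_convolution_le {f g : ℝ → ℝ≥0∞} (hf : Measurable f) (hg : Measurable g)
    (M : ℝ) :
    ∫⁻ t in Ioc 0 M, ∫⁻ s in Ioc 0 t, f (t - s) * g s ≤
      (∫⁻ s in Ioc 0 M, g s) * ∫⁻ u in Ico 0 M, f u := by
  set F := (Ico 0 M).indicator f
  have hF : Measurable F := hf.indicator measurableSet_Ico
  calc ∫⁻ t in Ioc 0 M, ∫⁻ s in Ioc 0 t, f (t - s) * g s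
      ≤ ∫⁻ t in Ioc 0 M, ∫⁻ s in Ioc 0 M, F (t - s) * g s := by
        refine setLIntegral_mono' measurableSet_Ioc fun t ht => ?_
        calc ∫⁻ s in Ioc 0 t, f (t - s) * g s = ∫⁻ s in Ioc 0 t, F (t - s) * g s :=
              setLIntegral_congr_fun measurableSet_Ioc fun s hs => by
                have hts : t - s ∈ Ico 0 M := ⟨by linarith [hs.2], by linarith [hs.1, ht.2]⟩
                rw [show F (t - s) = f (t - s) from indicator_of_mem hts f]
          _ ≤ ∫⁻ s in Ioc 0 M, F (t - s) * g s := lintegral_mono_set (Ioc_subset_Ioc_right ht.2)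
    _ = ∫⁻ s in Ioc 0 M, (∫⁻ t in Ioc 0 M, F (t - s)) * g s := by
        rw [lintegral_lintegral_swap]
        · exact lintegral_congr fun s => lintegral_mul_const _ (hF.comp (measurable_sub_const s))
        · exact ((hF.comp (measurable_fst.sub measurable_snd)).mul
            (hg.comp measurable_snd)).aemeasurable
    _ ≤ ∫⁻ s in Ioc 0 M, (∫⁻ u in Ico 0 M, f u) * g s := by
        refine lintegral_mono fun s => mul_le_mul_left ?_ _
        calc ∫⁻ t in Ioc 0 M, F (t - s) ≤ ∫⁻ t, F (t - s) := setLIntegral_le_lintegral _ _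
          _ = ∫⁻ u in Ico 0 M, f u := by
            rw [lintegral_sub_right_eq_self F s, lintegral_indicator measurableSet_Ico]
    _ = (∫⁻ s in Ioc 0 M, g s) * ∫⁻ u in Ico 0 M, f u := by
        rw [lintegral_const_mul _ hg, mul_comm]

section Renewal

variable {Λ h ψ : ℝ → ℝ} {θ B : ℝ}

theorem ofReal_le_of_renewal_eq {t : ℝ} (hB : 0 ≤ B) (hθ : 0 ≤ θ) (ht : 0 ≤ t)
    (hΛnn : ∀ u, 0 ≤ Λ u) (hhnn : ∀ u, 0 ≤ h u) (hψ : ∀ u, exp (Λ u) - 1 ≤ ψ u)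
    (heq : Λ t = θ * h t + B * ∫ s in (0:ℝ)..t, (exp (Λ (t - s)) - 1) * h s) :
    ENNReal.ofReal (Λ t) ≤ ENNReal.ofReal θ * ENNReal.ofReal (h t) +
      ENNReal.ofReal B * ∫⁻ s in Ioc 0 t, ENNReal.ofReal (ψ (t - s)) * ENNReal.ofReal (h s) := by
  have hconv : ∀ s, ‖(exp (Λ (t - s)) - 1) * h s‖ₑ ≤
      ENNReal.ofReal (ψ (t - s)) * ENNReal.ofReal (h s) := fun s => by
    rw [enorm_mul, Real.enorm_of_nonneg (sub_nonneg.2 (one_le_exp (hΛnn _))),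
      Real.enorm_of_nonneg (hhnn s)]
    gcongr
    exact hψ _
  rw [heq, intervalIntegral.integral_of_le ht]
  calc ENNReal.ofReal (θ * h t + B * ∫ s in Ioc 0 t, (exp (Λ (t - s)) - 1) * h s)
      ≤ ENNReal.ofReal θ * ENNReal.ofReal (h t) +
          ENNReal.ofReal B * ‖∫ s in Ioc 0 t, (exp (Λ (t - s)) - 1) * h s‖ₑ := by
        refine ENNReal.ofReal_add_le.trans ?_
        rw [ENNReal.ofReal_mul hθ, ENNReal.ofReal_mul hB]
        gcongr
        exact Real.ofReal_le_enorm _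
    _ ≤ _ := by grw [enorm_integral_le_lintegral_enorm, lintegral_mono hconv]

theorem setLIntegral_Ioc_le_of_renewal_eq (hB : 0 ≤ B) (hθ : 0 ≤ θ) (hmeash : Measurable h)
    (hmeasψ : Measurable ψ) (hΛnn : ∀ t, 0 ≤ Λ t) (hhnn : ∀ t, 0 ≤ h t)
    (hh1 : ∫⁻ t in Ioi 0, ENNReal.ofReal (h t) ≤ 1) (hψ : ∀ u, exp (Λ u) - 1 ≤ ψ u)
    (heq : ∀ t : ℝ, 0 ≤ t →
      Λ t = θ * h t + B * ∫ s in (0:ℝ)..t, (exp (Λ (t - s)) - 1) * h s) (M : ℝ) :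
    ∫⁻ t in Ioc 0 M, ENNReal.ofReal (Λ t) ≤
      ENNReal.ofReal θ + ENNReal.ofReal B * ∫⁻ u in Ico 0 M, ENNReal.ofReal (ψ u) := by
  have hhM : ∫⁻ t in Ioc 0 M, ENNReal.ofReal (h t) ≤ 1 :=
    (lintegral_mono_set Ioc_subset_Ioi_self).trans hh1
  calc ∫⁻ t in Ioc 0 M, ENNReal.ofReal (Λ t)
      ≤ ∫⁻ t in Ioc 0 M, (ENNReal.ofReal θ * ENNReal.ofReal (h t) + ENNReal.ofReal B *
          ∫⁻ s in Ioc 0 t, ENNReal.ofReal (ψ (t - s)) * ENNReal.ofReal (h s)) :=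
        setLIntegral_mono' measurableSet_Ioc fun t ht =>
          ofReal_le_of_renewal_eq hB hθ ht.1.le hΛnn hhnn hψ (heq t ht.1.le)
    _ = ENNReal.ofReal θ * (∫⁻ t in Ioc 0 M, ENNReal.ofReal (h t)) + ENNReal.ofReal B *
          ∫⁻ t in Ioc 0 M, ∫⁻ s in Ioc 0 t,
            ENNReal.ofReal (ψ (t - s)) * ENNReal.ofReal (h s) := by
        rw [lintegral_add_left (hmeash.ennreal_ofReal.const_mul _),
          lintegral_const_mul' _ _ ENNReal.ofReal_ne_top,
          lintegral_const_mul' _ _ ENNReal.ofReal_ne_top]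
    _ ≤ ENNReal.ofReal θ * 1 + ENNReal.ofReal B *
          ((∫⁻ s in Ioc 0 M, ENNReal.ofReal (h s)) * ∫⁻ u in Ico 0 M, ENNReal.ofReal (ψ u)) := by
        grw [hhM, setLIntegral_Ioc_convolution_le hmeasψ.ennreal_ofReal hmeash.ennreal_ofReal]
    _ ≤ ENNReal.ofReal θ + ENNReal.ofReal B * ∫⁻ u in Ico 0 M, ENNReal.ofReal (ψ u) := by
        grw [hhM, mul_one, one_mul]

end Renewal

theorem setLIntegral_Ico_ofReal_mul_add_indicator_le {Λ : ℝ → ℝ} (hΛ : Measurable Λ)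
    (hΛnn : ∀ t, 0 ≤ Λ t) {a K T : ℝ} (ha : 0 ≤ a) (hK : 0 ≤ K) (M : ℝ) :
    ∫⁻ u in Ico 0 M, ENNReal.ofReal (a * Λ u + (Iio T).indicator (fun _ => K) u) ≤
      ENNReal.ofReal a * (∫⁻ u in Ioc 0 M, ENNReal.ofReal (Λ u)) + ENNReal.ofReal (K * T) := by
  have hsplit : ∀ u, ENNReal.ofReal (a * Λ u + (Iio T).indicator (fun _ => K) u) =
      ENNReal.ofReal a * ENNReal.ofReal (Λ u) +
        (Iio T).indicator (fun _ => ENNReal.ofReal K) u := fun u => by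
    rw [ENNReal.ofReal_add (mul_nonneg ha (hΛnn u)) (indicator_nonneg (fun _ _ => hK) u),
      ENNReal.ofReal_mul ha]
    by_cases hu : u ∈ Iio T <;> simp [hu]
  simp_rw [hsplit]
  rw [lintegral_add_left (hΛ.ennreal_ofReal.const_mul _),
    lintegral_const_mul' _ _ ENNReal.ofReal_ne_top, setLIntegral_congr Ico_ae_eq_Ioc,
    lintegral_indicator_const measurableSet_Iio, Measure.restrict_apply measurableSet_Iio,
    ENNReal.ofReal_mul hK]
  gcongr
  calc volume (Iio T ∩ Ico 0 M) ≤ volume (Ico 0 T) := measure_mono fun u hu => ⟨hu.2.1, hu.1⟩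
    _ = ENNReal.ofReal T := by rw [Real.volume_Ico, sub_zero]

theorem ENNReal.le_ofReal_div_of_le_add_mul {x : ℝ≥0∞} {a c : ℝ} (hx : x ≠ ⊤) (ha : 0 ≤ a)
    (hc0 : 0 ≤ c) (hc : c < 1) (h : x ≤ ENNReal.ofReal a + ENNReal.ofReal c * x) :
    x ≤ ENNReal.ofReal (a / (1 - c)) := by
  lift x to NNReal using hx
  rw [← ENNReal.ofReal_coe_nnreal, ← ENNReal.ofReal_mul hc0, ← ENNReal.ofReal_add ha
    (mul_nonneg hc0 x.coe_nonneg), ENNReal.ofReal_le_ofReal_iff (by positivity)] at h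
  rw [← ENNReal.ofReal_coe_nnreal]
  refine ENNReal.ofReal_le_ofReal ((le_div_iff₀ (by linarith)).2 ?_)
  linarith

theorem setLIntegral_Ioi_le_of_forall_Ioc_le {f : ℝ → ℝ≥0∞} {a : ℝ} {c : ℝ≥0∞}
    (h : ∀ M, ∫⁻ t in Ioc a M, f t ≤ c) : ∫⁻ t in Ioi a, f t ≤ c := by
  have hU : ⋃ n : ℕ, Ioc a (a + n) = Ioi a := iUnion_Ioc_eq_Ioi_self_iff.2 fun x _ =>
    (exists_nat_ge (x - a)).imp fun n hn => by linarith
  have hmono : Monotone fun n : ℕ => Ioc a (a + n) := fun m n hmn =>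
    Ioc_subset_Ioc_right (by gcongr)
  rw [← hU, setLIntegral_iUnion_of_directed _ hmono.directed_le]
  exact iSup_le fun n => h _

theorem integrable_and_integral_le_of_lintegral_ofReal_le {α : Type*} [MeasurableSpace α]
    {μ : Measure α} {f : α → ℝ} (hf : AEStronglyMeasurable f μ) (hnn : 0 ≤ᵐ[μ] f) {R : ℝ}
    (hR : 0 ≤ R) (h : ∫⁻ x, ENNReal.ofReal (f x) ∂μ ≤ ENNReal.ofReal R) :
    Integrable f μ ∧ ∫ x, f x ∂μ ≤ R := by
  refine ⟨⟨hf, (hasFiniteIntegral_iff_ofReal hnn).2 (h.trans_lt ENNReal.ofReal_lt_top)⟩, ?_⟩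
  rw [integral_eq_lintegral_of_nonneg_ae hnn hf]
  exact ENNReal.toReal_le_of_le_ofReal hR h

theorem MeasureTheory.Integrable.exp_sub_one {α : Type*} [MeasurableSpace α] {μ : Measure α}
    {f : α → ℝ} (hf : Integrable f μ) (hnn : ∀ x, 0 ≤ f x) {C : ℝ} (hC : ∀ x, f x ≤ C) :
    Integrable (fun x => exp (f x) - 1) μ := by
  refine (hf.const_mul (exp C)).mono'
    ((continuous_exp.comp_aestronglyMeasurable hf.1).sub aestronglyMeasurable_const)
    (ae_of_all _ fun x => ?_)
  rw [Real.norm_of_nonneg (sub_nonneg.2 (one_le_exp (hnn x)))]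
  calc exp (f x) - 1 ≤ f x * exp (f x) := exp_sub_one_le_mul_exp (f x)
    _ ≤ f x * exp C := mul_le_mul_of_nonneg_left (exp_le_exp.2 (hC x)) (hnn x)
    _ = exp C * f x := mul_comm _ _

/-- If `Λ_θ : [0,∞) → [0,∞)` is bounded, tends to `0` at infinity and satisfies the renewal-type
equation `Λ_θ(t) = θ h(t) + B ∫₀^t (e^{Λ_θ(t−s)} − 1) h(s) ds` with `h ≥ 0`, `∫₀^∞ h = 1` and
`0 ≤ B < 1`, then for a suitable `δ > 0` with `B(1+δ) < 1` one has
`∫₀^∞ Λ_θ ≤ (θ + C_δ)/(1 − B(1+δ))`; in particular `∫₀^∞ Λ_θ < ∞` and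
`∫₀^∞ (e^{Λ_θ} − 1) < ∞`. -/
theorem renewal_equation_log_mgf_integrable
    (Λ h : ℝ → ℝ) (θ B : ℝ) (hθ : 0 ≤ θ) (hB0 : 0 ≤ B) (hB1 : B < 1)
    (hmeasΛ : Measurable Λ) (hmeash : Measurable h)
    (hhnn : ∀ t, 0 ≤ h t) (hhint : IntegrableOn h (Set.Ioi 0))
    (hnorm : ∫ t in Set.Ioi (0:ℝ), h t = 1)
    (hΛnn : ∀ t, 0 ≤ Λ t)
    (hbdd : ∃ C : ℝ, ∀ t, Λ t ≤ C)
    (hlim : Filter.Tendsto Λ Filter.atTop (nhds 0))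
    (heq : ∀ t : ℝ, 0 ≤ t →
      Λ t = θ * h t + B * ∫ s in (0:ℝ)..t, (exp (Λ (t - s)) - 1) * h s) :
    ∃ δ : ℝ, 0 < δ ∧ B * (1 + δ) < 1 ∧
      ∃ C_δ : ℝ, 0 ≤ C_δ ∧
        IntegrableOn Λ (Set.Ioi 0) ∧
        (∫ t in Set.Ioi (0:ℝ), Λ t) ≤ (θ + C_δ) / (1 - B * (1 + δ)) ∧
        IntegrableOn (fun t => exp (Λ t) - 1) (Set.Ioi 0) := by
  obtain ⟨C, hC⟩ := hbdd
  set δ := (1 - B) / 2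
  have hδ : 0 < δ := by positivity
  have hBδ : B * (1 + δ) < 1 := by simp only [δ]; nlinarith
  obtain ⟨T, hT, hψ⟩ := exists_exp_sub_one_le_of_tendsto_zero hΛnn hC hlim hδ
  have hK : 0 ≤ exp C - 1 := sub_nonneg.2 (one_le_exp ((hΛnn 0).trans (hC 0)))
  have hmeasψ : Measurable fun u => (1 + δ) * Λ u + (Iio T).indicator (fun _ => exp C - 1) u :=
    (hmeasΛ.const_mul _).add (measurable_const.indicator measurableSet_Iio)
  have hh1 : ∫⁻ t in Ioi 0, ENNReal.ofReal (h t) ≤ 1 := by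
    rw [← ofReal_integral_eq_lintegral_ofReal hhint (ae_of_all _ hhnn), hnorm, ENNReal.ofReal_one]
  have hbound : ∀ M, ∫⁻ t in Ioc 0 M, ENNReal.ofReal (Λ t) ≤
      ENNReal.ofReal ((θ + B * ((exp C - 1) * T)) / (1 - B * (1 + δ))) := fun M => by
    refine ENNReal.le_ofReal_div_of_le_add_mul (setLIntegral_lt_top_of_le_nnreal
      measure_Ioc_lt_top.ne ⟨C.toNNReal, fun t _ => ENNReal.ofReal_le_ofReal (hC t)⟩).ne
      (by positivity) (by positivity) hBδ ?_
    grw [setLIntegral_Ioc_le_of_renewal_eq hB0 hθ hmeash hmeasψ hΛnn hhnn hh1 hψ heq M,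
      setLIntegral_Ico_ofReal_mul_add_indicator_le hmeasΛ hΛnn (by positivity) hK M]
    rw [ENNReal.ofReal_add hθ (by positivity), ENNReal.ofReal_mul hB0, ENNReal.ofReal_mul hB0]
    exact le_of_eq (by ring)
  obtain ⟨hint, hle⟩ := integrable_and_integral_le_of_lintegral_ofReal_le
    hmeasΛ.aestronglyMeasurable (ae_of_all _ hΛnn) (by positivity)
    (setLIntegral_Ioi_le_of_forall_Ioc_le hbound)
  exact ⟨δ, hδ, hBδ, B * ((exp C - 1) * T), by positivity, hint, hle, hint.exp_sub_one hΛnn hC⟩
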